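/- Let d ≥ 1 and k ≥ 1, and let Φ be a Hermiticity-preserving linear map on the d×d complex matrices. The following are equivalent: (1) Φ is k-positive; (2) Ψ∘Φ is k-superpositive for every k-superpositive map Ψ; (3) Ψ∘Φ is completely positive for every k-superpositive map Ψ; (4) for every k-superpositive map Ψ, the number Tr(P_+ · (id_d ⊗ (Ψ∘Φ))(P_+)) is a nonnegative real number, where P_+ = ψ_+ ψ_+* and ψ_+ = ∑_{i=1}^d e_i ⊗ e_i is the unnormalized maximally entangled vector in ℂ^{d·d}. -/

import Mathlib

open Matrix Kronecker
open scoped ComplexOrder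

noncomputable section

abbrev Mat (d : ℕ) := Matrix (Fin d) (Fin d) ℂ

abbrev MatMap (d : ℕ) := Mat d →ₗ[ℂ] Mat d

abbrev Mat2 (d : ℕ) := Matrix (Fin d × Fin d) (Fin d × Fin d) ℂ

/-- The blockwise action of `id_I ⊗ Φ` on matrices indexed by `I × Fin d`:
`((id ⊗ Φ) M)((i,a),(j,b))` is the `(a,b)` entry of `Φ` applied to the `(i,j)` block of `M`. -/
def tensId {d : ℕ} (I : Type) (Φ : Mat d → Mat d)
    (M : Matrix (I × Fin d) (I × Fin d) ℂ) : Matrix (I × Fin d) (I × Fin d) ℂ :=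
  Matrix.of fun p q => Φ (Matrix.of fun a b => M (p.1, a) (q.1, b)) p.2 q.2

/-- `Φ` is `k`-positive: `id_{Fin k} ⊗ Φ` sends PSD matrices to PSD matrices. -/
def kPositive (d k : ℕ) (Φ : Mat d → Mat d) : Prop :=
  ∀ M : Matrix (Fin k × Fin d) (Fin k × Fin d) ℂ,
    M.PosSemidef → (tensId (Fin k) Φ M).PosSemidef

/-- `Φ` is completely positive: `k`-positive for every positive integer `k`. -/
def CompletelyPositive (d : ℕ) (Φ : Mat d → Mat d) : Prop :=
  ∀ k : ℕ, 0 < k → kPositive d k Φ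

/-- `Φ` is `k`-superpositive: a finite sum of maps `Ad_{a_i} : x ↦ aᵢ* x aᵢ`
with `rank aᵢ ≤ k`. -/
def kSuperpositive (d k : ℕ) (Φ : Mat d → Mat d) : Prop :=
  ∃ (n : ℕ) (a : Fin n → Mat d),
    (∀ i, (a i).rank ≤ k) ∧ ∀ x, Φ x = ∑ i, (a i)ᴴ * x * a i

/-- The Choi matrix of `Φ`: `C_Φ((i,a),(j,b)) = Φ(e_{ij})(a,b)`. -/
def choi {d : ℕ} (Φ : Mat d → Mat d) : Mat2 d :=
  Matrix.of fun p q => Φ (Matrix.single p.1 q.1 (1 : ℂ)) p.2 q.2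

/-- `v` has Schmidt rank at most `k`: `v = ∑_{l<k} φ_l ⊗ ψ_l`. -/
def SchmidtRankLE (d k : ℕ) (v : Fin d × Fin d → ℂ) : Prop :=
  ∃ φ ψ : Fin k → Fin d → ℂ, v = fun p => ∑ l, φ l p.1 * ψ l p.2

/-- `A` is `k`-block positive: Hermitian and `⟨v, A v⟩ ≥ 0` for every `v` of
Schmidt rank at most `k`. -/
def kBlockPositive (d k : ℕ) (A : Mat2 d) : Prop :=
  A.IsHermitian ∧ ∀ v : Fin d × Fin d → ℂ, SchmidtRankLE d k v → 0 ≤ star v ⬝ᵥ A *ᵥ v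

/-- `b` is `k`-separable: a finite sum of rank-one matrices `v v*` with `v` of
Schmidt rank at most `k`. -/
def kSeparable (d k : ℕ) (b : Mat2 d) : Prop :=
  ∃ (n : ℕ) (v : Fin n → (Fin d × Fin d → ℂ)),
    (∀ i, SchmidtRankLE d k (v i)) ∧ b = ∑ i, Matrix.vecMulVec (v i) (star (v i))

/-- `Φ` preserves Hermiticity. -/
def HermPreserving (d : ℕ) (Φ : Mat d → Mat d) : Prop :=
  ∀ x : Mat d, x.IsHermitian → (Φ x).IsHermitian

/-- The map `Ad_a : x ↦ a* x a`. -/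
def adFun {d : ℕ} (a : Mat d) : Mat d → Mat d := fun x => aᴴ * x * a

/-- Elementary tensor of two vectors: `(φ ⊗ ψ)(i,a) = φ(i)·ψ(a)`. -/
def tensorVec {d : ℕ} (φ ψ : Fin d → ℂ) : Fin d × Fin d → ℂ := fun p => φ p.1 * ψ p.2

/-- The unnormalized maximally entangled vector `ψ₊ = ∑ᵢ eᵢ ⊗ eᵢ`. -/
def psiPlus (d : ℕ) : Fin d × Fin d → ℂ := fun p => if p.1 = p.2 then 1 else 0

/-- `P₊ = ψ₊ ψ₊*`. -/
def Pplus (d : ℕ) : Mat2 d := Matrix.vecMulVec (psiPlus d) (star (psiPlus d))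

/-- The transpose, as a linear map on matrices. -/
def transLM (d : ℕ) : MatMap d where
  toFun x := xᵀ
  map_add' x y := by simp
  map_smul' c x := by simp

/-! Everything is read off the Choi matrix `C` of `Φ`. For Hermiticity-preserving `Φ`,
`k`-positivity says exactly that `C` is `k`-block positive: `⟨vec V, C vec V⟩ ≥ 0` whenever
`rank V ≤ k`, because `id ⊗ Φ` applied to a rank-one matrix is a compression of `C`.

(1 ⇒ 2): the Choi matrix of `Ad_a ∘ Φ` is `(1 ⊗ a)* C (1 ⊗ a)`, which is positive semidefinite
when `rank a ≤ k`. This alone gives Kraus operators of unknown rank, so pick `p` with `a p a = a`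
and write `Ad_a ∘ Φ = Ad_a ∘ (Ad_{a p} ∘ Φ)`: if `b r` are Kraus operators of `Ad_{a p} ∘ Φ`,
then the `b r * a` have rank at most `rank a ≤ k`.

(2 ⇒ 3 ⇒ 4) are immediate, and (4 ⇒ 1) takes `Ψ = Ad_V`, for which
`Tr(P₊ (id ⊗ Ψ∘Φ)(P₊)) = ⟨vec V, C vec V⟩`. -/

open scoped ComplexStarModule

theorem Matrix.exists_mul_eq_of_rank_le {K m n : Type*} [Field K] [Fintype m] [Fintype n]
    [DecidableEq n] {k : ℕ} {a : Matrix m n K} (h : a.rank ≤ k) :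
    ∃ (A : Matrix m (Fin k) K) (B : Matrix (Fin k) n K), a = A * B := by
  obtain ⟨ι, hι⟩ := finrank_le_iff_exists_linearMap.mp
    (h.trans_eq (Module.finrank_fin_fun K).symm :
      Module.finrank K (LinearMap.range a.mulVecLin) ≤ _)
  obtain ⟨π, hπ⟩ := ι.exists_leftInverse_of_injective (LinearMap.ker_eq_bot.mpr hι)
  refine ⟨LinearMap.toMatrix' ((LinearMap.range a.mulVecLin).subtype ∘ₗ π),
    LinearMap.toMatrix' (ι ∘ₗ a.mulVecLin.rangeRestrict), Matrix.toLin'.injective ?_⟩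
  refine LinearMap.ext fun v => ?_
  simp only [Matrix.toLin'_mul, Matrix.toLin'_toMatrix', LinearMap.comp_apply,
    ← LinearMap.comp_apply π ι, hπ, LinearMap.id_apply]
  rfl

theorem Matrix.exists_mul_mul_eq_self {K m n : Type*} [Field K] [Fintype m] [Fintype n]
    [DecidableEq m] [DecidableEq n] (a : Matrix m n K) : ∃ p : Matrix n m K, a * p * a = a := by
  obtain ⟨g, hg⟩ := a.mulVecLin.rangeRestrict.exists_rightInverse_of_surjective
    a.mulVecLin.range_rangeRestrict
  obtain ⟨g', hg'⟩ := LinearMap.exists_extend g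
  refine ⟨LinearMap.toMatrix' g', Matrix.toLin'.injective (LinearMap.ext fun v => ?_)⟩
  have hv := congrArg Subtype.val (LinearMap.congr_fun hg ⟨a *ᵥ v, v, rfl⟩)
  rw [← hg'] at hv
  simpa [Matrix.toLin'_mul] using hv

theorem Matrix.star_dotProduct_conjTranspose_mul_mul_mulVec {m n R : Type*} [Fintype m]
    [Fintype n] [CommSemiring R] [StarRing R] (Q : Matrix m n R) (C : Matrix m m R) (y : n → R) :
    star y ⬝ᵥ (Qᴴ * C * Q) *ᵥ y = star (Q *ᵥ y) ⬝ᵥ C *ᵥ (Q *ᵥ y) := by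
  simp only [star_mulVec, dotProduct_mulVec, vecMul_vecMul]

theorem Matrix.trace_vecMulVec_star_mul {n R : Type*} [Fintype n] [CommSemiring R] [StarRing R]
    (u : n → R) (N : Matrix n n R) :
    (vecMulVec u (star u) * N).trace = star u ⬝ᵥ N *ᵥ u := by
  rw [vecMulVec_mul, trace_vecMulVec, dotProduct_mulVec, dotProduct_comm]

section Hermitian

variable {d : ℕ} {Φ : MatMap d}

theorem HermPreserving.map_conjTranspose (hΦ : HermPreserving d ⇑Φ) (x : Mat d) :
    Φ xᴴ = (Φ x)ᴴ := by
  have hre : (ℜ x : Mat d).IsHermitian := (ℜ x).2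
  have him : (ℑ x : Mat d).IsHermitian := (ℑ x).2
  rw [← realPart_add_I_smul_imaginaryPart x]
  simp [conjTranspose_add, conjTranspose_smul, hre.eq, him.eq, (hΦ _ hre).eq, (hΦ _ him).eq]

theorem HermPreserving.isHermitian_tensId (hΦ : HermPreserving d ⇑Φ) {I : Type}
    {M : Matrix (I × Fin d) (I × Fin d) ℂ} (hM : M.IsHermitian) :
    (tensId I ⇑Φ M).IsHermitian := by
  ext p q
  have hblock : (of fun a b => M (q.1, a) (p.1, b))ᴴ = of fun a b => M (p.1, a) (q.1, b) :=
    Matrix.ext fun a b => congrFun₂ hM (p.1, a) (q.1, b)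
  change star (Φ (of fun a b => M (q.1, a) (p.1, b)) q.2 p.2) = _
  rw [← conjTranspose_apply, ← hΦ.map_conjTranspose, hblock]
  rfl

end Hermitian

section Choi

variable {d : ℕ}

def adLM (a : Mat d) : MatMap d where
  toFun x := aᴴ * x * a
  map_add' x y := by noncomm_ring
  map_smul' c x := by simp

@[simp] theorem adLM_apply (a x : Mat d) : adLM a x = aᴴ * x * a := rfl

theorem psiPlus_eq_vec_one : psiPlus d = vec 1 := by
  funext p
  simp [psiPlus, vec, one_apply, eq_comm]

theorem tensId_Pplus (f : Mat d → Mat d) : tensId (Fin d) f (Pplus d) = choi f := by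
  ext p q
  change f _ p.2 q.2 = f _ p.2 q.2
  congr 2
  ext a b
  by_cases h₁ : p.1 = a <;> by_cases h₂ : q.1 = b <;>
    simp [Pplus, psiPlus, vecMulVec_apply, h₁, h₂]

theorem HermPreserving.isHermitian_choi {Φ : MatMap d} (hΦ : HermPreserving d ⇑Φ) :
    (choi ⇑Φ).IsHermitian := by
  rw [← tensId_Pplus]
  exact hΦ.isHermitian_tensId (posSemidef_vecMulVec_self_star _).1

theorem apply_eq_sum_choi (Φ : MatMap d) (x : Mat d) (α β : Fin d) :
    Φ x α β = ∑ i, ∑ j, x i j * choi ⇑Φ (i, α) (j, β) := by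
  conv_lhs => rw [matrix_eq_sum_single x]
  simp only [map_sum, Matrix.sum_apply]
  refine Finset.sum_congr rfl fun i _ => Finset.sum_congr rfl fun j _ => ?_
  have hsingle : single i j (x i j) = x i j • single i j (1 : ℂ) := by
    rw [smul_single, smul_eq_mul, mul_one]
  rw [hsingle, Φ.map_smul]
  rfl

theorem tensId_sum (Φ : MatMap d) {I ι : Type} [Fintype ι]
    (M : ι → Matrix (I × Fin d) (I × Fin d) ℂ) :
    tensId I ⇑Φ (∑ r, M r) = ∑ r, tensId I ⇑Φ (M r) := by
  ext p q
  have hblock : (of fun a b => ∑ r, M r (p.1, a) (q.1, b)) =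
      ∑ r, of fun a b => M r (p.1, a) (q.1, b) := by
    ext a b
    simp [Matrix.sum_apply]
  simp only [tensId, of_apply, Matrix.sum_apply]
  rw [hblock, map_sum, Matrix.sum_apply]

theorem tensId_sum_maps {ι : Type} [Fintype ι] {I : Type} (f : ι → Mat d → Mat d)
    (M : Matrix (I × Fin d) (I × Fin d) ℂ) :
    tensId I (fun x => ∑ t, f t x) M = ∑ t, tensId I (f t) M := by
  ext p q
  simp [tensId, Matrix.sum_apply]

theorem tensId_conj {I : Type} [Fintype I] [DecidableEq I] (a : Mat d)
    (M : Matrix (I × Fin d) (I × Fin d) ℂ) :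
    tensId I (fun x => aᴴ * x * a) M = (1 ⊗ₖ a)ᴴ * M * (1 ⊗ₖ a) := by
  ext ⟨i, α⟩ ⟨j, β⟩
  simp [tensId, mul_apply, one_apply, Fintype.sum_prod_type, apply_ite (starRingEnd ℂ)]

theorem choi_adLM_comp (b : Mat d) (Θ : MatMap d) :
    choi ⇑((adLM b).comp Θ) = (1 ⊗ₖ b)ᴴ * choi ⇑Θ * (1 ⊗ₖ b) := by
  rw [← tensId_Pplus, ← tensId_Pplus, ← tensId_conj]
  rfl

theorem tensId_vecMulVec_vec (Φ : MatMap d) {I : Type} [Fintype I]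
    (U : Matrix (Fin d) I ℂ) :
    tensId I ⇑Φ (vecMulVec (vec U) (star (vec U))) =
      (Uᴴᵀ ⊗ₖ (1 : Mat d))ᴴ * choi ⇑Φ * (Uᴴᵀ ⊗ₖ (1 : Mat d)) := by
  ext ⟨i, α⟩ ⟨j, β⟩
  change Φ _ α β = _
  rw [apply_eq_sum_choi]
  simp [vecMulVec_apply, vec, mul_apply, one_apply, Fintype.sum_prod_type, Finset.sum_mul,
    apply_ite (starRingEnd ℂ)]
  rw [Finset.sum_comm]
  refine Finset.sum_congr rfl fun γ _ => Finset.sum_congr rfl fun δ _ => ?_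
  ring

theorem star_vec_dotProduct_tensId_mulVec_vec (Φ : MatMap d) {I : Type} [Fintype I]
    (U X : Matrix (Fin d) I ℂ) :
    star (vec X) ⬝ᵥ tensId I ⇑Φ (vecMulVec (vec U) (star (vec U))) *ᵥ vec X =
      star (vec (X * Uᴴ)) ⬝ᵥ choi ⇑Φ *ᵥ vec (X * Uᴴ) := by
  rw [tensId_vecMulVec_vec, star_dotProduct_conjTranspose_mul_mul_mulVec, kronecker_mulVec_vec,
    Matrix.one_mul, transpose_transpose]

theorem kraus_of_posSemidef_choi {Θ : MatMap d} (h : (choi ⇑Θ).PosSemidef) :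
    ∃ (n : ℕ) (b : Fin n → Mat d), ∀ x, Θ x = ∑ r, (b r)ᴴ * x * b r := by
  obtain ⟨n, v, hv⟩ := posSemidef_iff_eq_sum_vecMulVec.mp h
  refine ⟨n, fun r => of fun i α => star (v r (i, α)), fun x => ?_⟩
  ext α β
  rw [apply_eq_sum_choi, hv]
  simp [Matrix.sum_apply, mul_apply, vecMulVec_apply, Finset.mul_sum, Finset.sum_mul]
  rw [Finset.sum_comm]
  simp_rw [Finset.sum_comm (γ := Fin n)]
  refine Finset.sum_congr rfl fun r _ => Finset.sum_congr rfl fun j _ =>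
    Finset.sum_congr rfl fun i _ => by ring

end Choi

section Schmidt

variable {d k : ℕ}

theorem schmidtRankLE_vec_iff (V : Mat d) : SchmidtRankLE d k (vec V) ↔ V.rank ≤ k := by
  constructor
  · rintro ⟨φ, ψ, h⟩
    have hV : V = (of ψ)ᵀ * of φ := by
      ext α i
      simpa [mul_apply, mul_comm] using congrFun h (i, α)
    exact hV ▸ (rank_mul_le_left _ _).trans (rank_le_width _)
  · intro h
    obtain ⟨A, B, rfl⟩ := exists_mul_eq_of_rank_le h
    exact ⟨fun l i => B l i, fun l α => A α l, funext fun p => by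
      simp [vec, mul_apply, mul_comm]⟩

end Schmidt

section Positivity

variable {d k : ℕ}

theorem kPositive_iff_kBlockPositive_choi {Φ : MatMap d} (hΦ : HermPreserving d ⇑Φ) :
    kPositive d k ⇑Φ ↔ kBlockPositive d k (choi ⇑Φ) := by
  constructor
  · refine fun h => ⟨hΦ.isHermitian_choi, fun v hv => ?_⟩
    obtain ⟨V, rfl⟩ := vec_bijective.surjective v
    obtain ⟨A, B, rfl⟩ := exists_mul_eq_of_rank_le ((schmidtRankLE_vec_iff _).mp hv)
    have hAB := (h _ (posSemidef_vecMulVec_self_star (vec Bᴴ))).dotProduct_mulVec_nonneg (vec A)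
    rwa [star_vec_dotProduct_tensId_mulVec_vec, conjTranspose_conjTranspose] at hAB
  · intro hC M hM
    obtain ⟨n, u, rfl⟩ := posSemidef_iff_eq_sum_vecMulVec.mp hM
    refine .of_dotProduct_mulVec_nonneg (hΦ.isHermitian_tensId hM.1) fun x => ?_
    obtain ⟨X, rfl⟩ := vec_bijective.surjective x
    rw [tensId_sum, sum_mulVec, dotProduct_sum]
    refine Finset.sum_nonneg fun r _ => ?_
    obtain ⟨U, hU⟩ := vec_bijective.surjective (u r)
    rw [← hU, star_vec_dotProduct_tensId_mulVec_vec]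
    exact hC.2 _ ((schmidtRankLE_vec_iff _).mpr ((rank_mul_le_right _ _).trans (rank_le_height _)))

theorem kBlockPositive.posSemidef_conj_one_kronecker {C : Mat2 d} (hC : kBlockPositive d k C)
    {q : Mat d} (hq : q.rank ≤ k) : ((1 ⊗ₖ q)ᴴ * C * (1 ⊗ₖ q)).PosSemidef := by
  refine .of_dotProduct_mulVec_nonneg (isHermitian_conjTranspose_mul_mul _ hC.1) fun y => ?_
  obtain ⟨Y, rfl⟩ := vec_bijective.surjective y
  rw [star_dotProduct_conjTranspose_mul_mul_mulVec, ← vec_mul_eq_mulVec]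
  exact hC.2 _ ((schmidtRankLE_vec_iff _).mpr ((rank_mul_le_left _ _).trans hq))

theorem kBlockPositive.kSuperpositive_adLM_comp {Φ : MatMap d}
    (hC : kBlockPositive d k (choi ⇑Φ)) {a : Mat d} (ha : a.rank ≤ k) :
    kSuperpositive d k ⇑((adLM a).comp Φ) := by
  obtain ⟨p, hp⟩ := exists_mul_mul_eq_self a
  obtain ⟨n, b, hb⟩ := kraus_of_posSemidef_choi (Θ := (adLM (a * p)).comp Φ) (by
    rw [choi_adLM_comp]
    exact hC.posSemidef_conj_one_kronecker ((rank_mul_le_left _ _).trans ha))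
  refine ⟨n, fun r => b r * a, fun r => (rank_mul_le_right _ _).trans ha, fun x => ?_⟩
  calc aᴴ * Φ x * a = aᴴ * ((a * p)ᴴ * Φ x * (a * p)) * a := by
        conv_lhs => rw [← hp]
        simp only [conjTranspose_mul, Matrix.mul_assoc]
    _ = ∑ r, (b r * a)ᴴ * x * (b r * a) := by
        rw [show (a * p)ᴴ * Φ x * (a * p) = (adLM (a * p)).comp Φ x from rfl, hb,
          Matrix.mul_sum, Matrix.sum_mul]
        simp only [conjTranspose_mul, Matrix.mul_assoc]

theorem kSuperpositive_sum {n : ℕ} {f : Fin n → Mat d → Mat d}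
    (hf : ∀ t, kSuperpositive d k (f t)) : kSuperpositive d k fun x => ∑ t, f t x := by
  choose m b hb hfb using hf
  refine ⟨∑ t, m t, fun s => b (finSigmaFinEquiv.symm s).1 (finSigmaFinEquiv.symm s).2,
    fun s => hb _ _, fun x => ?_⟩
  rw [Equiv.sum_comp finSigmaFinEquiv.symm (fun σ => (b σ.1 σ.2)ᴴ * x * b σ.1 σ.2),
    Fintype.sum_sigma]
  exact Finset.sum_congr rfl fun t _ => hfb t x

theorem kBlockPositive.kSuperpositive_comp {Φ : MatMap d} (hC : kBlockPositive d k (choi ⇑Φ))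
    {Ψ : MatMap d} (hΨ : kSuperpositive d k ⇑Ψ) : kSuperpositive d k ⇑(Ψ.comp Φ) := by
  obtain ⟨n, a, ha, hΨa⟩ := hΨ
  rw [show ⇑(Ψ.comp Φ) = fun x => ∑ t, (adLM (a t)).comp Φ x from funext fun x => hΨa (Φ x)]
  exact kSuperpositive_sum fun t => hC.kSuperpositive_adLM_comp (ha t)

theorem kSuperpositive.completelyPositive {Θ : Mat d → Mat d} (h : kSuperpositive d k Θ) :
    CompletelyPositive d Θ := by
  obtain ⟨n, a, -, hΘ⟩ := h
  intro m _ M hM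
  rw [show Θ = fun x => ∑ t, (a t)ᴴ * x * a t from funext hΘ, tensId_sum_maps]
  exact posSemidef_sum _ fun t _ => tensId_conj (a t) M ▸ hM.conjTranspose_mul_mul_same _

theorem CompletelyPositive.kPositive {Θ : Mat d → Mat d} (h : CompletelyPositive d Θ) (m : ℕ) :
    kPositive d m Θ := by
  rcases Nat.eq_zero_or_pos m with rfl | hm
  · intro M _
    rw [Subsingleton.elim (tensId _ Θ M) 0]
    exact .zero
  · exact h m hm

theorem CompletelyPositive.trace_Pplus_mul_tensId_nonneg {Θ : Mat d → Mat d}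
    (h : CompletelyPositive d Θ) : 0 ≤ (Pplus d * tensId (Fin d) Θ (Pplus d)).trace := by
  rw [Pplus, trace_vecMulVec_star_mul]
  exact (h.kPositive d _ (posSemidef_vecMulVec_self_star _)).dotProduct_mulVec_nonneg _

theorem kPositive_of_trace_nonneg {Φ : MatMap d} (hΦ : HermPreserving d ⇑Φ)
    (h : ∀ Ψ : MatMap d, kSuperpositive d k ⇑Ψ →
      0 ≤ (Pplus d * tensId (Fin d) ⇑(Ψ.comp Φ) (Pplus d)).trace) :
    kPositive d k ⇑Φ := by
  refine (kPositive_iff_kBlockPositive_choi hΦ).mpr ⟨hΦ.isHermitian_choi, fun v hv => ?_⟩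
  obtain ⟨V, rfl⟩ := vec_bijective.surjective v
  have hV : kSuperpositive d k ⇑(adLM V) :=
    ⟨1, fun _ => V, fun _ => (schmidtRankLE_vec_iff V).mp hv, fun x => by simp⟩
  have hVΦ := h _ hV
  rwa [tensId_Pplus, choi_adLM_comp, Pplus, trace_vecMulVec_star_mul,
    star_dotProduct_conjTranspose_mul_mul_mulVec, psiPlus_eq_vec_one, ← vec_mul_eq_mulVec,
    Matrix.mul_one] at hVΦ

end Positivity

theorem stmt16_general (d k : ℕ) (Φ : MatMap d)
    (hΦ : HermPreserving d ⇑Φ) :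
    (kPositive d k ⇑Φ ↔
      ∀ Ψ : MatMap d, kSuperpositive d k ⇑Ψ → kSuperpositive d k ⇑(Ψ.comp Φ)) ∧
    (kPositive d k ⇑Φ ↔
      ∀ Ψ : MatMap d, kSuperpositive d k ⇑Ψ → CompletelyPositive d ⇑(Ψ.comp Φ)) ∧
    (kPositive d k ⇑Φ ↔
      ∀ Ψ : MatMap d, kSuperpositive d k ⇑Ψ →
        0 ≤ (Pplus d * tensId (Fin d) ⇑(Ψ.comp Φ) (Pplus d)).trace) := by
  have h12 : kPositive d k ⇑Φ →
      ∀ Ψ : MatMap d, kSuperpositive d k ⇑Ψ → kSuperpositive d k ⇑(Ψ.comp Φ) :=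
    fun h _ => ((kPositive_iff_kBlockPositive_choi hΦ).mp h).kSuperpositive_comp
  have h23 : (∀ Ψ : MatMap d, kSuperpositive d k ⇑Ψ → kSuperpositive d k ⇑(Ψ.comp Φ)) →
      ∀ Ψ : MatMap d, kSuperpositive d k ⇑Ψ → CompletelyPositive d ⇑(Ψ.comp Φ) :=
    fun h Ψ hΨ => (h Ψ hΨ).completelyPositive
  have h34 : (∀ Ψ : MatMap d, kSuperpositive d k ⇑Ψ → CompletelyPositive d ⇑(Ψ.comp Φ)) →
      ∀ Ψ : MatMap d, kSuperpositive d k ⇑Ψ →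
        0 ≤ (Pplus d * tensId (Fin d) ⇑(Ψ.comp Φ) (Pplus d)).trace :=
    fun h Ψ hΨ => (h Ψ hΨ).trace_Pplus_mul_tensId_nonneg
  have h41 := kPositive_of_trace_nonneg (k := k) hΦ
  exact ⟨⟨h12, h41 ∘ h34 ∘ h23⟩, ⟨h23 ∘ h12, h41 ∘ h34⟩, ⟨h34 ∘ h23 ∘ h12, h41⟩⟩

/-- for a Hermiticity-preserving `Φ`, the following are equivalent:
(1) `Φ` is `k`-positive; (2) `Ψ ∘ Φ` is `k`-superpositive for every `k`-superpositive
`Ψ`; (3) `Ψ ∘ Φ` is completely positive for every `k`-superpositive `Ψ`;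
(4) `Tr(P₊ (id ⊗ (Ψ∘Φ))(P₊)) ≥ 0` for every `k`-superpositive `Ψ`. -/
theorem stmt16 (d k : ℕ) (hd : 1 ≤ d) (hk : 1 ≤ k) (Φ : MatMap d)
    (hΦ : HermPreserving d ⇑Φ) :
    (kPositive d k ⇑Φ ↔
      ∀ Ψ : MatMap d, kSuperpositive d k ⇑Ψ → kSuperpositive d k ⇑(Ψ.comp Φ)) ∧
    (kPositive d k ⇑Φ ↔
      ∀ Ψ : MatMap d, kSuperpositive d k ⇑Ψ → CompletelyPositive d ⇑(Ψ.comp Φ)) ∧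
    (kPositive d k ⇑Φ ↔
      ∀ Ψ : MatMap d, kSuperpositive d k ⇑Ψ →
        0 ≤ (Pplus d * tensId (Fin d) ⇑(Ψ.comp Φ) (Pplus d)).trace) :=
  stmt16_general d k Φ hΦ
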